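/- For every τ > 0, every natural number m, and every y ∈ ℝ, one has ∫_ℝ K_τ(y,z)·h_m(z) dz = e^{(1 − m/2)τ}·h_m(y), where K_τ is the one-dimensional Mehler-type kernel. In other words, h_m is an eigenfunction of the integral operator with kernel K_τ, with eigenvalue e^{(1 − m/2)τ}. -/

import Mathlib

open Real MeasureTheory

/-- Physicists' Hermite polynomials, determined by `H 0 = 1`, `H 1 x = 2x` and the
recurrence `H (m+1) x = 2x · H m x − (H m)' x`. -/
noncomputable def physHermite : ℕ → ℝ → ℝ
  | 0 => fun _ => 1
  | m + 1 => fun x => 2 * x * physHermite m x - deriv (physHermite m) x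

/-- The normalizing constants `c_m = 2^{−m/2} (4π)^{−1/4} (m!)^{−1/2}`. -/
noncomputable def hermiteCoeff (m : ℕ) : ℝ :=
  (2 : ℝ) ^ (-(m : ℝ) / 2) * (4 * π) ^ (-(1 / 4 : ℝ)) * (m.factorial : ℝ) ^ (-(1 / 2 : ℝ))

/-- The normalized Hermite functions `h_m(y) = c_m · H_m(y/2)`. -/
noncomputable def h (m : ℕ) (y : ℝ) : ℝ := hermiteCoeff m * physHermite m (y / 2)

/-- The one-dimensional Mehler-type kernel
`K_τ(y,z) = e^τ (4π(1 − e^{−τ}))^{−1/2} exp(−(y e^{−τ/2} − z)²/(4(1 − e^{−τ})))`. -/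
noncomputable def K (τ y z : ℝ) : ℝ :=
  Real.exp τ * (4 * π * (1 - Real.exp (-τ))) ^ (-(1 / 2 : ℝ)) *
    Real.exp (-(y * Real.exp (-τ / 2) - z) ^ 2 / (4 * (1 - Real.exp (-τ))))

/-! Centring the Gaussian `K_τ(y, ·)` at `y e^{-τ/2}` and rescaling `z = 2βt` with
`β² = 1 - e^{-τ}` reduces the claim to `∫ e^{-(x-t)²} H_m(βt) dt = √π γ^m H_m(βx/γ)` whenever
`β² + γ² = 1` (here `γ = e^{-τ/2}`). Both sides satisfy `f_{m+1} = 2βx f_m - 2mγ² f_{m-1}`: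
for the right side this is the recurrence `H_{m+1}(u) = 2u H_m(u) - 2m H_{m-1}(u)`, for the
left side it follows from that recurrence and the integration by parts
`∫ e^{-(x-t)²} t p(t) dt = x ∫ e^{-(x-t)²} p(t) dt + ½ ∫ e^{-(x-t)²} p'(t) dt`. -/

open Polynomial

noncomputable def physHermitePoly : ℕ → ℝ[X]
  | 0 => 1
  | m + 1 => 2 * X * physHermitePoly m - derivative (physHermitePoly m)

theorem physHermite_apply (m : ℕ) (x : ℝ) : physHermite m x = (physHermitePoly m).eval x := by
  induction m generalizing x with
  | zero => simp [physHermite, physHermitePoly]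
  | succ m ih => simp [physHermite, physHermitePoly, funext ih, Polynomial.deriv]

theorem derivative_physHermitePoly_succ (m : ℕ) :
    derivative (physHermitePoly (m + 1)) = C (2 * (m + 1 : ℝ)) * physHermitePoly m := by
  induction m with
  | zero => simp [physHermitePoly, C_ofNat]
  | succ m ih =>
    have hdef : physHermitePoly (m + 1) =
        2 * X * physHermitePoly m - derivative (physHermitePoly m) := rfl
    rw [physHermitePoly, derivative_sub, derivative_mul, ih, derivative_C_mul, hdef]
    simp only [derivative_mul, derivative_ofNat, derivative_X]
    push_cast
    simp only [map_add, map_mul, map_ofNat, map_one, map_natCast]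
    ring

theorem derivative_physHermitePoly (m : ℕ) :
    derivative (physHermitePoly m) = C (2 * (m : ℝ)) * physHermitePoly (m - 1) := by
  cases m with
  | zero => simp [physHermitePoly]
  | succ m => simpa using derivative_physHermitePoly_succ m

-- At `m = 0` the truncated `m - 1` is harmless: its coefficient vanishes.
theorem physHermitePoly_succ (m : ℕ) :
    physHermitePoly (m + 1) =
      C 2 * X * physHermitePoly m - C (2 * (m : ℝ)) * physHermitePoly (m - 1) := by
  rw [physHermitePoly, derivative_physHermitePoly, C_ofNat]

theorem integrable_eval_mul_exp_neg_sq (p : ℝ[X]) :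
    Integrable fun t : ℝ => p.eval t * exp (-t ^ 2) := by
  induction p using Polynomial.induction_on' with
  | add p q hp hq =>
    exact (hp.add hq).congr (Filter.Eventually.of_forall fun t => by simp [add_mul])
  | monomial n a =>
    have hpow : Integrable fun t : ℝ => t ^ n * exp (-1 * t ^ 2) := by
      simpa [Real.rpow_natCast] using
        integrable_rpow_mul_exp_neg_mul_sq one_pos (s := n) (by linarith [n.cast_nonneg (α := ℝ)])
    simpa [mul_assoc] using hpow.const_mul a

theorem integrable_exp_neg_sq_mul_eval (x : ℝ) (p : ℝ[X]) :
    Integrable fun t : ℝ => exp (-(x - t) ^ 2) * p.eval t := by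
  refine ((integrable_eval_mul_exp_neg_sq (taylor x p)).comp_sub_right x).congr
    (Filter.Eventually.of_forall fun t => ?_)
  dsimp only
  rw [taylor_eval, sub_add_cancel, mul_comm, ← neg_sub x t, neg_sq]

noncomputable def gaussianConvolution (x : ℝ) : ℝ[X] →ₗ[ℝ] ℝ where
  toFun p := ∫ t, exp (-(x - t) ^ 2) * p.eval t
  map_add' p q := by
    simp only [eval_add, mul_add]
    exact integral_add (integrable_exp_neg_sq_mul_eval x p) (integrable_exp_neg_sq_mul_eval x q)
  map_smul' c p := by
    simp only [eval_smul, smul_eq_mul, RingHom.id_apply, mul_left_comm _ c]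
    exact integral_const_mul c _

theorem gaussianConvolution_apply (x : ℝ) (p : ℝ[X]) :
    gaussianConvolution x p = ∫ t, exp (-(x - t) ^ 2) * p.eval t := rfl

theorem gaussianConvolution_C_mul (x c : ℝ) (p : ℝ[X]) :
    gaussianConvolution x (C c * p) = c * gaussianConvolution x p := by
  rw [C_mul', map_smul, smul_eq_mul]

theorem gaussianConvolution_one (x : ℝ) : gaussianConvolution x 1 = √π := by
  have hshift : ∫ t, exp (-(x - t) ^ 2) = ∫ t, exp (-1 * (t - x) ^ 2) := by
    congr 1; ext t; ring_nf
  rw [gaussianConvolution_apply]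
  simp only [eval_one, mul_one]
  rw [hshift, integral_sub_right_eq_self (fun u => exp (-1 * u ^ 2)) x, integral_gaussian]
  simp

theorem gaussianConvolution_derivative (x : ℝ) (p : ℝ[X]) :
    gaussianConvolution x (derivative p) = 2 * gaussianConvolution x ((X - C x) * p) := by
  have hderiv : ∀ t, HasDerivAt (fun t => exp (-(x - t) ^ 2) * p.eval t)
      (exp (-(x - t) ^ 2) * (derivative p - 2 * ((X - C x) * p)).eval t) t := by
    intro t
    have hsq : HasDerivAt (fun t => -(x - t) ^ 2) (2 * (x - t)) t :=
      (((hasDerivAt_id t).const_sub x).pow 2).neg.congr_deriv (by simp)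
    refine (hsq.exp.mul (p.hasDerivAt t)).congr_deriv ?_
    simp only [eval_sub, eval_mul, eval_ofNat, eval_X, eval_C]
    ring
  have := integral_eq_zero_of_hasDerivAt_of_integrable hderiv
    (integrable_exp_neg_sq_mul_eval x _) (integrable_exp_neg_sq_mul_eval x p)
  rw [← gaussianConvolution_apply, map_sub, sub_eq_zero] at this
  rw [this, ← C_ofNat, gaussianConvolution_C_mul]

theorem gaussianConvolution_X_mul (x : ℝ) (p : ℝ[X]) :
    gaussianConvolution x (X * p) =
      x * gaussianConvolution x p + gaussianConvolution x (derivative p) / 2 := by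
  rw [gaussianConvolution_derivative, sub_mul, map_sub, gaussianConvolution_C_mul]
  ring

theorem gaussianConvolution_physHermitePoly_comp (x : ℝ) {β γ : ℝ} (hγ : γ ≠ 0)
    (hβγ : β ^ 2 + γ ^ 2 = 1) (m : ℕ) :
    gaussianConvolution x ((physHermitePoly m).comp (C β * X)) =
      √π * γ ^ m * (physHermitePoly m).eval (β * x / γ) := by
  induction m using Nat.strong_induction_on with
  | _ m ih =>
  cases m with
  | zero => simp [physHermitePoly, gaussianConvolution_one]
  | succ m =>
    set Q : ℕ → ℝ[X] := fun k => (physHermitePoly k).comp (C β * X)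
    have hQ : Q (m + 1) = C (2 * β) * (X * Q m) - C (2 * (m : ℝ)) * Q (m - 1) := by
      simp only [Q, physHermitePoly_succ, sub_comp, mul_comp, C_comp, X_comp, C_mul]
      ring
    have hQ' : derivative (Q m) = C (2 * m * β) * Q (m - 1) := by
      simp only [Q, derivative_comp, derivative_physHermitePoly, mul_comp, C_comp,
        derivative_mul, derivative_C, derivative_X, C_mul]
      ring
    have hpow : (m : ℝ) * (γ ^ 2 * γ ^ (m - 1)) = m * γ ^ (m + 1) := by
      cases m with
      | zero => simp
      | succ k => rw [Nat.add_sub_cancel]; ring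
    calc gaussianConvolution x (Q (m + 1))
        = 2 * β * x * gaussianConvolution x (Q m)
            - 2 * m * (1 - β ^ 2) * gaussianConvolution x (Q (m - 1)) := by
          rw [hQ, map_sub, gaussianConvolution_C_mul, gaussianConvolution_C_mul,
            gaussianConvolution_X_mul, hQ', gaussianConvolution_C_mul]
          ring
      _ = √π * γ ^ (m + 1) * (physHermitePoly (m + 1)).eval (β * x / γ) := by
          rw [ih m (by omega), ih (m - 1) (by omega), physHermitePoly_succ]
          have hγm : γ ^ (m + 1) * (β * x / γ) = β * x * γ ^ m := by
            field_simp
            ring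
          simp only [eval_sub, eval_mul, eval_C, eval_X]
          linear_combination
            (-2) * √π * (physHermitePoly m).eval (β * x / γ) * hγm
              - 2 * √π * (physHermitePoly (m - 1)).eval (β * x / γ) * hpow
              + 2 * √π * (physHermitePoly (m - 1)).eval (β * x / γ) * m * γ ^ (m - 1) * hβγ

theorem integral_exp_neg_sq_div_mul_physHermite_half (m : ℕ) {β γ : ℝ} (hβ : 0 < β)
    (hγ : γ ≠ 0) (hβγ : β ^ 2 + γ ^ 2 = 1) (c : ℝ) :
    ∫ z, exp (-(c - z) ^ 2 / (4 * β ^ 2)) * physHermite m (z / 2) =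
      2 * β * √π * γ ^ m * physHermite m (c / (2 * γ)) := by
  have hscale := Measure.integral_comp_mul_left
    (fun z => exp (-(c - z) ^ 2 / (4 * β ^ 2)) * physHermite m (z / 2)) (2 * β)
  have hintegrand :
      (fun t => exp (-(c - 2 * β * t) ^ 2 / (4 * β ^ 2)) * physHermite m (2 * β * t / 2)) =
        fun t => exp (-(c / (2 * β) - t) ^ 2) * ((physHermitePoly m).comp (C β * X)).eval t := by
    ext t
    rw [physHermite_apply, eval_comp]
    congr 2
    · field_simp
      ring
    · simp only [eval_mul, eval_C, eval_X]
      ring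
  rw [hintegrand, ← gaussianConvolution_apply, gaussianConvolution_physHermitePoly_comp _ hγ hβγ,
    abs_of_pos (by positivity), smul_eq_mul,
    show β * (c / (2 * β)) / γ = c / (2 * γ) by field_simp, ← physHermite_apply] at hscale
  rw [eq_inv_mul_iff_mul_eq₀ (by positivity)] at hscale
  rw [← hscale]
  ring

/-- `h_m` is an eigenfunction of the integral operator with kernel `K_τ`,
with eigenvalue `e^{(1 − m/2)τ}`. -/
theorem mehler_kernel_eigenfunction (τ : ℝ) (hτ : 0 < τ) (m : ℕ) (y : ℝ) :
    ∫ z : ℝ, K τ y z * h m z = Real.exp ((1 - (m : ℝ) / 2) * τ) * h m y := by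
  set s := exp (-τ / 2)
  set β := √(1 - exp (-τ))
  have hs : exp (-τ) = s ^ 2 := by rw [sq, ← exp_add]; ring_nf
  have hpos : 0 < 1 - exp (-τ) := by simpa using hτ
  have hβ : 0 < β := sqrt_pos.2 hpos
  have hβsq : β ^ 2 = 1 - exp (-τ) := sq_sqrt hpos.le
  have hβs : β ^ 2 + s ^ 2 = 1 := by rw [hβsq, ← hs]; ring
  have hnorm : (4 * π * (1 - exp (-τ))) ^ (-(1 / 2 : ℝ)) = (2 * √π * β)⁻¹ := by
    rw [rpow_neg (by positivity), ← sqrt_eq_rpow, sqrt_mul (by positivity), sqrt_mul zero_le_four,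
      show (4 : ℝ) = 2 ^ 2 by norm_num, sqrt_sq zero_le_two]
  have hK : ∀ z, K τ y z * h m z = exp τ * (2 * √π * β)⁻¹ * hermiteCoeff m *
      (exp (-(y * s - z) ^ 2 / (4 * β ^ 2)) * physHermite m (z / 2)) := by
    intro z
    rw [K, h, hnorm, hβsq]
    ring
  have heigen : exp τ * s ^ m = exp ((1 - (m : ℝ) / 2) * τ) := by
    rw [← exp_nat_mul, ← exp_add]
    ring_nf
  rw [integral_congr_ae (ae_of_all _ hK), integral_const_mul,
    integral_exp_neg_sq_div_mul_physHermite_half m hβ (exp_pos _).ne' hβs,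
    mul_div_mul_right _ _ (exp_pos _).ne', h, ← heigen]
  have hcancel : (2 * √π * β)⁻¹ * (2 * β * √π) = 1 := by field_simp
  linear_combination exp τ * hermiteCoeff m * s ^ m * physHermite m (y / 2) * hcancel
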